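/- arXiv:2301.09741 — 2 statements merged into one kernel-verified Lean document; each statement's English description precedes it below -/
import Mathlib

section
/- For every Hessenberg space H, the Hessenberg variety H(F_k, H) is K-stable for the subtorus K = {t = diag(t_1,…,t_n) ∈ T : t_{1+(n−k)}/t_1 = t_{2+(n−k)}/t_2 = ⋯ = t_n/t_k}; that is, if t ∈ K and g⁻¹ F_k g ∈ H then (tg)⁻¹ F_k (tg) ∈ H. In particular, the Hessenberg variety H(F_1, H) is T-stable for every Hessenberg space H. -/
/-!
Conjugation by `t = diag(t_1, …, t_n)` multiplies the entry `X i j` by `t j / t i`. For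
`X = F_k` the only nonzero entries sit at `(i, i + (n - k))`, so on the subtorus `K` it acts on
`F_k` as multiplication by a single scalar `c`. Hence `(t g)⁻¹ F_k (t g) = c • g⁻¹ F_k g`, and a
Hessenberg space, being a linear subspace, is stable under scaling. For `k = 1` the defining
condition of `K` is empty, so `K = T`.
-/

/-- The Hessenberg space of a Hessenberg function `h` (0-based indices). -/
def hessSpace {n : ℕ} (h : Fin n → Fin n) : Set (Matrix (Fin n) (Fin n) ℂ) :=
  {M | ∀ i j : Fin n, h j < i → M i j = 0}

/-- `F_k`: the `n × n` matrix with entry `1` in positions `(i, n-k+i)` for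
`i = 1, …, k` (1-based). -/
def Fmat (n k : ℕ) : Matrix (Fin n) (Fin n) ℂ :=
  Matrix.of fun i j => if (i : ℕ) < k ∧ (j : ℕ) = n - k + (i : ℕ) then 1 else 0

open Matrix

theorem smul_mem_hessSpace {n : ℕ} {h : Fin n → Fin n} {M : Matrix (Fin n) (Fin n) ℂ}
    (c : ℂ) (hM : M ∈ hessSpace h) : c • M ∈ hessSpace h := by
  intro i j hij
  simp [hM i j hij]

theorem Fmat_apply_ne_zero {n k : ℕ} {i j : Fin n} (hij : Fmat n k i j ≠ 0) :
    (i : ℕ) < k ∧ (j : ℕ) = i + (n - k) := by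
  by_contra hne
  exact hij (if_neg (by omega))

namespace Matrix

theorem exists_ratio_eq_of_ratio_eq_on_support {ι K : Type*} [Field K]
    (X : Matrix ι ι K) (t : ι → K)
    (hX : ∀ i i' j j', X i j ≠ 0 → X i' j' ≠ 0 → t j * (t i)⁻¹ = t j' * (t i')⁻¹) :
    ∃ c, ∀ i j, X i j ≠ 0 → t j * (t i)⁻¹ = c := by
  by_cases hsupp : ∃ i j, X i j ≠ 0
  · obtain ⟨i₀, j₀, h₀⟩ := hsupp
    exact ⟨t j₀ * (t i₀)⁻¹, fun i j hij => hX i i₀ j j₀ hij h₀⟩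
  · push Not at hsupp
    exact ⟨1, fun i j hij => absurd (hsupp i j) hij⟩


variable {ι K : Type*} [Fintype ι] [DecidableEq ι] [Field K]

theorem inv_diagonal_of_ne_zero {t : ι → K} (ht : ∀ i, t i ≠ 0) :
    (diagonal t)⁻¹ = diagonal t⁻¹ :=
  inv_eq_left_inv <| by
    rw [diagonal_mul_diagonal, ← diagonal_one]
    exact congrArg diagonal (funext fun i => inv_mul_cancel₀ (ht i))

theorem inv_diagonal_mul_mul_diagonal_eq_smul {X : Matrix ι ι K} {t : ι → K} {c : K}
    (ht : ∀ i, t i ≠ 0) (hc : ∀ i j, X i j ≠ 0 → t j * (t i)⁻¹ = c) :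
    (diagonal t)⁻¹ * X * diagonal t = c • X := by
  ext i j
  rw [inv_diagonal_of_ne_zero ht, mul_diagonal, diagonal_mul, smul_apply, smul_eq_mul]
  by_cases hij : X i j = 0
  · simp [hij]
  · rw [← hc i j hij, Pi.inv_apply]
    ring

theorem conj_diagonal_mul_eq_smul {X g : Matrix ι ι K} {t : ι → K} {c : K}
    (hX : (diagonal t)⁻¹ * X * diagonal t = c • X) :
    (diagonal t * g)⁻¹ * X * (diagonal t * g) = c • (g⁻¹ * X * g) := by
  rw [mul_inv_rev, ← Matrix.smul_mul, ← Matrix.mul_smul, ← hX]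
  simp only [Matrix.mul_assoc]

end Matrix

theorem conj_Fmat_mem_hessSpace_of_ratio_eq {n k : ℕ} (h : Fin n → Fin n)
    {t : Fin n → ℂ} (ht : ∀ i, t i ≠ 0)
    (hK : ∀ i i' j j' : Fin n, (i : ℕ) < k → (i' : ℕ) < k →
      (j : ℕ) = (i : ℕ) + (n - k) → (j' : ℕ) = (i' : ℕ) + (n - k) →
      t j * (t i)⁻¹ = t j' * (t i')⁻¹)
    {g : Matrix (Fin n) (Fin n) ℂ} (hg : g⁻¹ * Fmat n k * g ∈ hessSpace h) :
    (diagonal t * g)⁻¹ * Fmat n k * (diagonal t * g) ∈ hessSpace h := by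
  obtain ⟨c, hc⟩ := (Fmat n k).exists_ratio_eq_of_ratio_eq_on_support t
    fun i i' j j' hij hij' =>
      hK i i' j j' (Fmat_apply_ne_zero hij).1 (Fmat_apply_ne_zero hij').1
        (Fmat_apply_ne_zero hij).2 (Fmat_apply_ne_zero hij').2
  rw [conj_diagonal_mul_eq_smul (inv_diagonal_mul_mul_diagonal_eq_smul ht hc)]
  exact smul_mem_hessSpace c hg

theorem stmt5_general {n k : ℕ} (h : Fin n → Fin n) :
    (∀ t : Fin n → ℂ, (∀ i, t i ≠ 0) →
      (∀ i i' j j' : Fin n, (i : ℕ) < k → (i' : ℕ) < k →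
        (j : ℕ) = (i : ℕ) + (n - k) → (j' : ℕ) = (i' : ℕ) + (n - k) →
        t j * (t i)⁻¹ = t j' * (t i')⁻¹) →
      ∀ g : Matrix (Fin n) (Fin n) ℂ, IsUnit g →
        g⁻¹ * Fmat n k * g ∈ hessSpace h →
        (Matrix.diagonal t * g)⁻¹ * Fmat n k * (Matrix.diagonal t * g) ∈ hessSpace h) ∧
    (∀ t : Fin n → ℂ, (∀ i, t i ≠ 0) →
      ∀ g : Matrix (Fin n) (Fin n) ℂ, IsUnit g →
        g⁻¹ * Fmat n 1 * g ∈ hessSpace h →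
        (Matrix.diagonal t * g)⁻¹ * Fmat n 1 * (Matrix.diagonal t * g) ∈ hessSpace h) := by
  refine ⟨fun t ht hK g _ hg => conj_Fmat_mem_hessSpace_of_ratio_eq h ht hK hg,
    fun t ht g _ hg => conj_Fmat_mem_hessSpace_of_ratio_eq h ht ?_ hg⟩
  intro i i' j j' hi hi' hj hj'
  have hii' : i = i' := Fin.ext (by omega)
  have hjj' : j = j' := Fin.ext (by omega)
  rw [hii', hjj']

/-- For every Hessenberg space `H`, `H(F_k, H)` is stable under the
subtorus `K = {t ∈ T : t_{1+(n-k)}/t_1 = ⋯ = t_n/t_k}`; in particular `H(F_1, H)`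
is `T`-stable. -/
theorem stmt5 {n k : ℕ} (hk1 : 1 ≤ k) (hk2 : k ≤ n - 1)
    (h : Fin n → Fin n) (hh1 : ∀ i, i ≤ h i) (hh2 : Monotone h) :
    (∀ t : Fin n → ℂ, (∀ i, t i ≠ 0) →
      (∀ i i' j j' : Fin n, (i : ℕ) < k → (i' : ℕ) < k →
        (j : ℕ) = (i : ℕ) + (n - k) → (j' : ℕ) = (i' : ℕ) + (n - k) →
        t j * (t i)⁻¹ = t j' * (t i')⁻¹) →
      ∀ g : Matrix (Fin n) (Fin n) ℂ, IsUnit g →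
        g⁻¹ * Fmat n k * g ∈ hessSpace h →
        (Matrix.diagonal t * g)⁻¹ * Fmat n k * (Matrix.diagonal t * g) ∈ hessSpace h) ∧
    (∀ t : Fin n → ℂ, (∀ i, t i ≠ 0) →
      ∀ g : Matrix (Fin n) (Fin n) ℂ, IsUnit g →
        g⁻¹ * Fmat n 1 * g ∈ hessSpace h →
        (Matrix.diagonal t * g)⁻¹ * Fmat n 1 * (Matrix.diagonal t * g) ∈ hessSpace h) :=
  stmt5_general h
end

section
/- Let 1 ≤ k ≤ n−1 and let H be the Hessenberg space of the Hessenberg function with h(j) = n−1 for all j < n and h(n) = n. If g, g' ∈ GL(n,ℂ) lie in the same double coset of B, i.e. g' ∈ B g B, and g⁻¹ F_k g ∈ H, then also g'⁻¹ F_k g' ∈ H. Hence the Hessenberg variety H(F_k, H) is a union of Schubert cells BwB/B. -/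
/-- The Hessenberg space for the Hessenberg function with `h(j) = n-1` for `j < n`
and `h(n) = n` (1-based). -/
def Hlast (n : ℕ) : Set (Matrix (Fin n) (Fin n) ℂ) :=
  {M | ∀ i j : Fin n, (i : ℕ) = n - 1 → (j : ℕ) < n - 1 → M i j = 0}

/-- Upper-triangular: all entries strictly below the diagonal vanish.  The Borel `B`
consists of the invertible upper-triangular matrices. -/
def UT {n : ℕ} (M : Matrix (Fin n) (Fin n) ℂ) : Prop :=
  ∀ i j : Fin n, j < i → M i j = 0

/-! A conjugate `M = g⁻¹ F_k g` of the nilpotent matrix `F_k` lies in `H` only if its last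
row vanishes: that row is `c eₙ` with `c = Mₙₙ`, and `(Mᴺ)ₙₙ = cᴺ` forces `c = 0`. Hence
`M ∈ H` iff the last row `u` of `g⁻¹` satisfies `u F_k = 0`, i.e. `u` vanishes on its first `k`
coordinates. Passing from `g` to `b₁ g b₂` replaces `u` by a multiple of `u b₁⁻¹`, and right
multiplication by an upper-triangular matrix preserves vanishing on an initial segment. -/

open Matrix

namespace Matrix

variable {m R : Type*} [Fintype m]

theorem IsUpperTriangular.vecMul_apply_eq_zero [LinearOrder m] [NonUnitalNonAssocSemiring R]
    {b : Matrix m m R} (hb : b.IsUpperTriangular) {v : m → R} {j : m}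
    (hv : ∀ l ≤ j, v l = 0) : (v ᵥ* b) j = 0 :=
  Finset.sum_eq_zero fun l _ => by
    rcases le_or_gt l j with hlj | hjl
    · exact mul_eq_zero_of_left (hv l hlj) _
    · exact mul_eq_zero_of_right _ (hb hjl)

theorem IsUpperTriangular.mul_apply_of_isTop [LinearOrder m] [NonUnitalNonAssocSemiring R]
    {b : Matrix m m R} (hb : b.IsUpperTriangular) (X : Matrix m m R) {i : m} (hi : IsTop i)
    (j : m) : (b * X) i j = b i i * X i j :=
  Finset.sum_eq_single i (fun l _ hli => mul_eq_zero_of_left (hb ((hi l).lt_of_ne hli)) _)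
    (fun h => absurd (Finset.mem_univ i) h)

variable [DecidableEq m]

theorem IsUpperTriangular.isNilpotent_of_diag_eq_zero [LinearOrder m] [CommRing R]
    {M : Matrix m m R} (hM : M.IsUpperTriangular) (hdiag : ∀ i, M i i = 0) :
    IsNilpotent M :=
  ⟨Fintype.card m, by simpa [charpoly_of_isUpperTriangular M hM, hdiag] using aeval_self_charpoly M⟩

theorem IsUpperTriangular.inv [LinearOrder m] [CommRing R] {M : Matrix m m R}
    (hM : M.IsUpperTriangular) (hu : IsUnit M) : M⁻¹.IsUpperTriangular :=
  have := hu.invertible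
  blockTriangular_inv_of_blockTriangular hM

theorem apply_self_eq_zero_of_isNilpotent [CommRing R] [IsReduced R] {M : Matrix m m R}
    (hM : IsNilpotent M) {i : m} (hrow : ∀ j, j ≠ i → M i j = 0) : M i i = 0 := by
  have hpow : ∀ N : ℕ, (M ^ N) i i = M i i ^ N := by
    intro N
    induction N with
    | zero => simp
    | succ N ih =>
      rw [pow_succ', mul_apply, Finset.sum_eq_single i
        (fun j _ hji => mul_eq_zero_of_left (hrow j hji) _) (fun h => absurd (Finset.mem_univ i) h),
        ih, pow_succ']
  obtain ⟨N, hN⟩ := hM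
  exact IsNilpotent.eq_zero ⟨N, by rw [← hpow, hN, zero_apply]⟩

theorem isNilpotent_conj [CommRing R] {g x : Matrix m m R} (hg : IsUnit g)
    (hx : IsNilpotent x) : IsNilpotent (g⁻¹ * x * g) := by
  obtain ⟨N, hN⟩ := hx
  have hsemi : SemiconjBy g (g⁻¹ * x * g) x := by
    rw [SemiconjBy, ← mul_assoc, ← mul_assoc, mul_nonsing_inv g ((isUnit_iff_isUnit_det g).mp hg),
      one_mul]
  refine ⟨N, (hg.mul_right_eq_zero).mp ?_⟩
  rw [(hsemi.pow_right N).eq, hN, zero_mul]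

end Matrix

variable {n k : ℕ}

theorem Fmat_isUpperTriangular : (Fmat n k).IsUpperTriangular := by
  intro i j hji
  simp only [Fmat, of_apply, ite_eq_right_iff, and_imp]
  intro _ _
  have : (j : ℕ) < i := hji
  omega

theorem Fmat_isNilpotent (hk : k ≤ n - 1) : IsNilpotent (Fmat n k) :=
  Fmat_isUpperTriangular.isNilpotent_of_diag_eq_zero fun i => by
    simp only [Fmat, of_apply, ite_eq_right_iff, and_imp]
    omega

theorem vecMul_Fmat_eq_zero_iff (u : Fin n → ℂ) :
    u ᵥ* Fmat n k = 0 ↔ ∀ i : Fin n, (i : ℕ) < k → u i = 0 := by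
  constructor
  · intro h i hi
    have := congrFun h ⟨n - k + i, by omega⟩
    simp only [vecMul, dotProduct, Pi.zero_apply] at this
    rwa [Finset.sum_eq_single i (fun m _ hmi => ?_) (fun h => absurd (Finset.mem_univ i) h),
      Fmat, of_apply, if_pos ⟨hi, rfl⟩, mul_one] at this
    refine mul_eq_zero_of_right _ (if_neg fun hm => hmi (Fin.ext ?_))
    simp only at hm
    omega
  · intro h
    funext j
    simp only [vecMul, dotProduct, Pi.zero_apply]
    refine Finset.sum_eq_zero fun m _ => ?_
    by_cases hm : (m : ℕ) < k
    · exact mul_eq_zero_of_left (h m hm) _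
    · exact mul_eq_zero_of_right _ (if_neg fun hc => hm hc.1)

theorem mem_Hlast_iff_of_isNilpotent {M : Matrix (Fin n) (Fin n) ℂ} (hM : IsNilpotent M) :
    M ∈ Hlast n ↔ ∀ i : Fin n, (i : ℕ) = n - 1 → M i = 0 := by
  refine ⟨fun hH i hi => ?_, fun h i j hi _ => by rw [h i hi, Pi.zero_apply]⟩
  have hrow : ∀ j, j ≠ i → M i j = 0 := fun j hji =>
    hH i j hi (by have := Fin.val_ne_of_ne hji; omega)
  funext j
  rcases eq_or_ne j i with rfl | hji
  · exact apply_self_eq_zero_of_isNilpotent hM hrow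
  · exact hrow j hji

theorem conj_Fmat_mem_Hlast_iff (hk : k ≤ n - 1) {g : Matrix (Fin n) (Fin n) ℂ} (hg : IsUnit g) :
    g⁻¹ * Fmat n k * g ∈ Hlast n ↔
      ∀ i : Fin n, (i : ℕ) = n - 1 → ∀ j : Fin n, (j : ℕ) < k → g⁻¹ i j = 0 := by
  rw [mem_Hlast_iff_of_isNilpotent (isNilpotent_conj hg (Fmat_isNilpotent hk))]
  refine forall₂_congr fun i _ => ?_
  rw [mul_apply_eq_vecMul, mul_apply_eq_vecMul,
    (vecMul_injective_of_isUnit hg).eq_iff' (zero_vecMul g), vecMul_Fmat_eq_zero_iff]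

theorem stmt7_general {n k : ℕ} (hk2 : k ≤ n - 1)
    (g g' b₁ b₂ : Matrix (Fin n) (Fin n) ℂ)
    (hg : IsUnit g) (hb₁ : IsUnit b₁) (hb₂ : IsUnit b₂)
    (hb₁u : UT b₁) (hb₂u : UT b₂)
    (hg' : g' = b₁ * g * b₂)
    (hmem : g⁻¹ * Fmat n k * g ∈ Hlast n) :
    g'⁻¹ * Fmat n k * g' ∈ Hlast n := by
  have hg'u : IsUnit g' := hg' ▸ (hb₁.mul hg).mul hb₂
  rw [conj_Fmat_mem_Hlast_iff hk2 hg] at hmem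
  rw [conj_Fmat_mem_Hlast_iff hk2 hg'u]
  intro i hi j hj
  have hinv : g'⁻¹ = b₂⁻¹ * (g⁻¹ * b₁⁻¹) := by rw [hg', Matrix.mul_inv_rev, Matrix.mul_inv_rev]
  have hi_top : IsTop i := fun l => Fin.le_def.2 (by omega)
  rw [hinv, (IsUpperTriangular.inv hb₂u hb₂).mul_apply_of_isTop _ hi_top, mul_apply_eq_vecMul,
    (IsUpperTriangular.inv hb₁u hb₁).vecMul_apply_eq_zero fun l hl => hmem i hi l (by omega),
    mul_zero]

/-- With `H` the Hessenberg space for `h(j) = n-1` (`j < n`), `h(n) = n`: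
if `g' ∈ B g B` (i.e. `g' = b₁ g b₂` with `b₁, b₂` invertible upper-triangular) and
`g⁻¹ F_k g ∈ H`, then `g'⁻¹ F_k g' ∈ H`.  Hence `H(F_k, H)` is a union of Schubert
cells `BwB/B`. -/
theorem stmt7 {n k : ℕ} (hn : 2 ≤ n) (hk1 : 1 ≤ k) (hk2 : k ≤ n - 1)
    (g g' b₁ b₂ : Matrix (Fin n) (Fin n) ℂ)
    (hg : IsUnit g) (hb₁ : IsUnit b₁) (hb₂ : IsUnit b₂)
    (hb₁u : UT b₁) (hb₂u : UT b₂)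
    (hg' : g' = b₁ * g * b₂)
    (hmem : g⁻¹ * Fmat n k * g ∈ Hlast n) :
    g'⁻¹ * Fmat n k * g' ∈ Hlast n :=
  stmt7_general hk2 g g' b₁ b₂ hg hb₁ hb₂ hb₁u hb₂u hg' hmem
end
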